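/- For all nonnegative integers m, positive integers k, and x, E_m^{(k)}(x+k) = Σ_{n=0}^{m} Ĉh_n^{(k)}(x) S_2(m,n). -/

import Mathlib

open PowerSeries Finset

/-- Higher-order Changhee numbers of the first kind. -/
noncomputable def Ch (k n : ℕ) : ℚ := (-1/2)^n * n.factorial * ((n+k-1).choose n)

/-- Signed Stirling numbers of the first kind, via coefficients of the falling factorial. -/
noncomputable def stirling1 (n l : ℕ) : ℚ :=
  (∏ i ∈ Finset.range n, (Polynomial.X - (i : Polynomial ℚ))).coeff l

/-- Stirling numbers of the second kind, via (e^t-1)^n = n! Σ S₂(m,n) t^m/m!. -/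
noncomputable def stirling2 (m n : ℕ) : ℚ :=
  (m.factorial : ℚ) / n.factorial * PowerSeries.coeff (R := ℚ) m ((PowerSeries.exp ℚ - 1)^n)

/-- Higher-order Euler numbers, from (2/(e^t+1))^k. -/
noncomputable def EulerN (k l : ℕ) : ℚ :=
  l.factorial * PowerSeries.coeff (R := ℚ) l ((2 * (PowerSeries.exp ℚ + 1)⁻¹)^k)

/-- Higher-order Euler polynomials, from (2/(e^t+1))^k e^{xt}. -/
noncomputable def EulerP (k : ℕ) (x : ℚ) (l : ℕ) : ℚ :=
  l.factorial * PowerSeries.coeff (R := ℚ) l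
    ((2 * (PowerSeries.exp ℚ + 1)⁻¹)^k * PowerSeries.rescale x (PowerSeries.exp ℚ))

/-- Generalized binomial coefficient. -/
noncomputable def gbinom (x : ℚ) (m : ℕ) : ℚ := (∏ i ∈ Finset.range m, (x - i)) / m.factorial

/-- Binomial series (1+t)^x. -/
noncomputable def onePlusXPow (x : ℚ) : PowerSeries ℚ := PowerSeries.mk fun m => gbinom x m

/-- Higher-order Changhee polynomials of the first kind, from (2/(2+t))^k (1+t)^x. -/
noncomputable def ChP (k : ℕ) (x : ℚ) (n : ℕ) : ℚ :=
  n.factorial * PowerSeries.coeff (R := ℚ) n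
    ((2 * (2 + PowerSeries.X : PowerSeries ℚ)⁻¹)^k * onePlusXPow x)

/-- Higher-order Changhee numbers of the second kind, from (2/(2+t))^k (1+t)^k. -/
noncomputable def ChhN (k n : ℕ) : ℚ :=
  n.factorial * PowerSeries.coeff (R := ℚ) n
    ((2 * (2 + PowerSeries.X : PowerSeries ℚ)⁻¹)^k * (1 + PowerSeries.X)^k)

/-- Higher-order Changhee polynomials of the second kind, from (2/(2+t))^k (1+t)^{x+k}. -/
noncomputable def ChP2 (k : ℕ) (x : ℚ) (n : ℕ) : ℚ :=
  n.factorial * PowerSeries.coeff (R := ℚ) n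
    ((2 * (2 + PowerSeries.X : PowerSeries ℚ)⁻¹)^k * onePlusXPow (x + k))


/-! Substituting `t = e ^ s - 1` turns `(1 + t) ^ y` into `e ^ (y s)` and `2 / (2 + t)` into
`2 / (e ^ s + 1)`, so it maps the generating function `(2 / (2 + t)) ^ k (1 + t) ^ (x + k)` of
`Ĉh_n^{(k)}(x)` to the generating function `(2 / (e ^ s + 1)) ^ k e ^ ((x + k) s)` of
`E_m^{(k)}(x + k)`. Comparing coefficients of `s ^ m`, with
`(e ^ s - 1) ^ n = n! Σ_m S₂(m, n) s ^ m / m!`, gives the identity. -/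

namespace PowerSeries

open Nat

theorem coeff_subst_eq_sum_range {R : Type*} [CommRing R] {a : R⟦X⟧} (ha : constantCoeff a = 0) (f : R⟦X⟧) (m : ℕ) :
    coeff m (f.subst a) = ∑ n ∈ range (m + 1), coeff n f * coeff m (a ^ n) := by
  rw [coeff_subst' (HasSubst.of_constantCoeff_zero' ha)]
  refine finsum_eq_sum_of_support_subset _ fun n hn => ?_
  rw [Function.mem_support] at hn
  rw [coe_range, Set.mem_Iio, Nat.lt_succ_iff]
  by_contra! hmn
  have hX : X ^ n ∣ a ^ n := pow_dvd_pow_of_dvd (X_dvd_iff.mpr ha) n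
  exact hn (by rw [X_pow_dvd_iff.mp hX m hmn, smul_zero])

theorem subst_inv {K : Type*} [Field K] {a : K⟦X⟧} (ha : HasSubst a) {f : K⟦X⟧}
    (hf : constantCoeff f ≠ 0) : (f⁻¹).subst a = (f.subst a)⁻¹ := by
  have hmul : f⁻¹.subst a * f.subst a = 1 := by
    rw [← subst_mul ha, PowerSeries.inv_mul_cancel _ hf, ← coe_substAlgHom ha, map_one]
  have hc : constantCoeff (f.subst a) ≠ 0 := right_ne_zero_of_mul_eq_one (by
    rw [← map_mul, hmul, map_one])
  exact (eq_inv_iff_mul_eq_one hc).mpr hmul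

section Exp

variable {A : Type*} [CommRing A] [Algebra ℚ A]

theorem hasSubst_exp_sub_one : HasSubst (exp A - 1) :=
  HasSubst.of_constantCoeff_zero' (by simp)

theorem eq_C_mul_rescale_exp_of_derivative_eq_smul {f : A⟦X⟧} (c : A) (hf : d⁄dX A f = c • f) :
    f = C (constantCoeff f) * rescale c (exp A) := by
  ext n
  induction n with
  | zero => simp
  | succ n ih =>
    have h := congrArg (coeff n) hf
    rw [coeff_derivative, coeff_smul, ih, coeff_C_mul, coeff_rescale, coeff_exp] at h
    have hunit : ((n : A) + 1) * algebraMap ℚ A (1 / (n + 1)) = 1 := by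
      rw [← map_natCast (algebraMap ℚ A), ← map_one (algebraMap ℚ A), ← map_add, ← map_mul,
        mul_one_div_cancel (Nat.cast_add_one_ne_zero n)]
    have hfac : algebraMap ℚ A (1 / (n + 1)! : ℚ) =
        algebraMap ℚ A (1 / n !) * algebraMap ℚ A (1 / (n + 1)) := by
      rw [← map_mul, Nat.factorial_succ, Nat.cast_mul, Nat.cast_add_one, one_div_mul_one_div,
        mul_comm]
    calc coeff (n + 1) f = coeff (n + 1) f * (n + 1) * algebraMap ℚ A (1 / (n + 1)) := by
          rw [mul_assoc, hunit, mul_one]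
      _ = coeff (n + 1) (C (constantCoeff f) * rescale c (exp A)) := by
          rw [h, coeff_C_mul, coeff_rescale, coeff_exp, hfac, smul_eq_mul]
          ring

end Exp

end PowerSeries

theorem gbinom_succ_mul (y : ℚ) (n : ℕ) : gbinom y (n + 1) * (n + 1) = gbinom y n * (y - n) := by
  rw [gbinom, gbinom, prod_range_succ, Nat.factorial_succ, Nat.cast_mul]
  field_simp
  push_cast
  ring

theorem constantCoeff_onePlusXPow (y : ℚ) : constantCoeff (onePlusXPow y) = 1 := by
  simp [onePlusXPow, gbinom, ← coeff_zero_eq_constantCoeff_apply]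

theorem one_add_X_mul_derivative_onePlusXPow (y : ℚ) :
    (1 + X) * d⁄dX ℚ (onePlusXPow y) = y • onePlusXPow y := by
  ext n
  rw [add_mul, one_mul, map_add, coeff_smul, smul_eq_mul, coeff_derivative]
  rcases n with _ | n
  · simp [onePlusXPow, gbinom]
  · rw [coeff_succ_X_mul, coeff_derivative]
    simp only [onePlusXPow, coeff_mk]
    have h := gbinom_succ_mul y (n + 1)
    push_cast at h ⊢
    linear_combination h

/-- `(1 + t) ^ y` is characterised by `(1 + t) F' = y F`, `F 0 = 1`; by the chain rule, and since
`1 + (e ^ s - 1) = (e ^ s)'`, its composite with `e ^ s - 1` solves `G' = y G`, `G 0 = 1`. -/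
theorem subst_exp_sub_one_onePlusXPow (y : ℚ) :
    (onePlusXPow y).subst (exp ℚ - 1) = rescale y (exp ℚ) := by
  have ha : HasSubst (exp ℚ - 1) := hasSubst_exp_sub_one
  have hexp : (1 + X : ℚ⟦X⟧).subst (exp ℚ - 1) = exp ℚ := by
    rw [subst_add ha, ← coe_substAlgHom ha, map_one, coe_substAlgHom ha, subst_X ha]
    ring
  have hode : d⁄dX ℚ ((onePlusXPow y).subst (exp ℚ - 1)) =
      y • (onePlusXPow y).subst (exp ℚ - 1) := by
    rw [derivative_subst ha, map_sub, derivative_exp, derivative_one, sub_zero, ← subst_smul ha,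
      ← one_add_X_mul_derivative_onePlusXPow, mul_comm, subst_mul ha, hexp]
  have hconst : constantCoeff ((onePlusXPow y).subst (exp ℚ - 1)) = 1 := by
    rw [← coeff_zero_eq_constantCoeff_apply, coeff_subst_eq_sum_range (by simp)]
    simp [constantCoeff_onePlusXPow]
  rw [eq_C_mul_rescale_exp_of_derivative_eq_smul y hode, hconst, map_one, one_mul]

theorem subst_exp_sub_one_changhee_gen_eq_euler_gen (k : ℕ) (y : ℚ) :
    ((2 * (2 + X : ℚ⟦X⟧)⁻¹) ^ k * onePlusXPow y).subst (exp ℚ - 1) =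
      (2 * (exp ℚ + 1)⁻¹) ^ k * rescale y (exp ℚ) := by
  have ha : HasSubst (exp ℚ - 1) := hasSubst_exp_sub_one
  have htwo : (2 : ℚ⟦X⟧).subst (exp ℚ - 1) = 2 := by
    rw [← coe_substAlgHom ha, map_ofNat]
  have htwo_add_X : (2 + X : ℚ⟦X⟧).subst (exp ℚ - 1) = exp ℚ + 1 := by
    rw [subst_add ha, htwo, subst_X ha]
    ring
  have hc : constantCoeff (2 + X : ℚ⟦X⟧) ≠ 0 := by
    rw [map_add, map_ofNat, constantCoeff_X, add_zero]
    exact two_ne_zero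
  rw [subst_mul ha, subst_pow ha, subst_mul ha, htwo, subst_inv ha hc, htwo_add_X,
    subst_exp_sub_one_onePlusXPow]

theorem euler_shift_eq_changhee2_poly_stirling2_general (m : ℕ) (k : ℕ) (x : ℚ) :
    EulerP k (x + k) m = ∑ n ∈ Finset.range (m+1), ChP2 k x n * stirling2 m n := by
  rw [EulerP, ← subst_exp_sub_one_changhee_gen_eq_euler_gen,
    coeff_subst_eq_sum_range (by simp), mul_sum]
  refine sum_congr rfl fun n _ => ?_
  rw [ChP2, stirling2]
  field_simp

theorem euler_shift_eq_changhee2_poly_stirling2 (m : ℕ) (k : ℕ) (hk : 0 < k) (x : ℚ) :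
    EulerP k (x + k) m = ∑ n ∈ Finset.range (m+1), ChP2 k x n * stirling2 m n :=
  euler_shift_eq_changhee2_poly_stirling2_general m k x
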